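/- If A is an Artinian skew left brace (every descending chain of ideals is eventually stationary), then A/Rad(A) is isomorphic to a direct product of finitely many simple skew left braces. -/

import Mathlib

/-- A skew left brace: `(A,+)` and `(A,∘)` (written `*`) are groups with
`a ∘ (b + c) = a ∘ b - a + a ∘ c`. -/
class SkewBrace (A : Type*) extends AddGroup A, Group A where
  compat : ∀ a b c : A, a * (b + c) = a * b + (-a + a * c)

namespace SkewBrace

variable {A : Type*}

/-- `λ_a (b) = -a + a ∘ b`. -/
def lam [SkewBrace A] (a b : A) : A := -a + a * b

/-- `a * b = λ_a(b) - b = -a + a∘b - b` (the brace star operation). -/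
def star [SkewBrace A] (a b : A) : A := -a + a * b - b

/-- An ideal of a skew left brace: a subgroup of `(A,+)`, normal in `(A,+)` and
`(A,∘)`, and invariant under all `λ_a`. -/
structure Ideal (A : Type*) [SkewBrace A] where
  carrier : Set A
  zero_mem : (0 : A) ∈ carrier
  add_mem : ∀ ⦃a b : A⦄, a ∈ carrier → b ∈ carrier → a + b ∈ carrier
  neg_mem : ∀ ⦃a : A⦄, a ∈ carrier → -a ∈ carrier
  add_conj_mem : ∀ (a : A) ⦃b : A⦄, b ∈ carrier → a + b + -a ∈ carrier
  mul_conj_mem : ∀ (a : A) ⦃b : A⦄, b ∈ carrier → a * b * a⁻¹ ∈ carrier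
  lam_mem : ∀ (a : A) ⦃b : A⦄, b ∈ carrier → lam a b ∈ carrier

/-- The ideal generated by a set, as a set. -/
def genIdeal [SkewBrace A] (S : Set A) : Set A :=
  {x | ∀ I : Ideal A, S ⊆ I.carrier → x ∈ I.carrier}

/-- A maximal ideal: a proper ideal such that the only ideals containing it are
itself and the whole brace. -/
def Ideal.IsMaximal [SkewBrace A] (M : Ideal A) : Prop :=
  M.carrier ≠ Set.univ ∧
    ∀ J : Ideal A, M.carrier ⊆ J.carrier → J.carrier = M.carrier ∨ J.carrier = Set.univ

/-- The radical: the intersection of all maximal ideals (the whole brace if there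
are none). -/
def radical (A : Type*) [SkewBrace A] : Set A :=
  {x | ∀ M : Ideal A, M.IsMaximal → x ∈ M.carrier}

/-- The set of all elements `a * b` (star). -/
def starSet (A : Type*) [SkewBrace A] : Set A := {x | ∃ a b : A, star a b = x}

/-- `A⁽²⁾` as the ideal generated by all `a * b`. -/
def sq (A : Type*) [SkewBrace A] : Set A := genIdeal (starSet A)

/-- `A⁽²⁾` as the additive subgroup generated by all `a * b`. -/
def sqAdd (A : Type*) [SkewBrace A] : Set A := (AddSubgroup.closure (starSet A) : Set A)

open scoped Classical in
/-- The weight of a skew left brace: the minimal number of elements generating it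
as an ideal (with `ω(0) = 1` by convention). -/
noncomputable def weight (A : Type*) [SkewBrace A] : ℕ∞ :=
  if Subsingleton A then 1
  else ⨅ (S : Finset A) (_ : genIdeal (S : Set A) = Set.univ), (S.card : ℕ∞)

/-- Artinian: every descending chain of ideals is eventually stationary. -/
def IsArtinian (A : Type*) [SkewBrace A] : Prop :=
  ∀ f : ℕ → Ideal A, (∀ n, (f (n + 1)).carrier ⊆ (f n).carrier) →
    ∃ N, ∀ n, N ≤ n → (f n).carrier = (f N).carrier

/-- A homomorphism of skew left braces. -/
structure BraceHom (A B : Type*) [SkewBrace A] [SkewBrace B] where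
  toFun : A → B
  map_add' : ∀ x y, toFun (x + y) = toFun x + toFun y
  map_mul' : ∀ x y, toFun (x * y) = toFun x * toFun y

/-- The kernel of a brace homomorphism. -/
def BraceHom.ker {A B : Type*} [SkewBrace A] [SkewBrace B] (f : BraceHom A B) : Set A :=
  {a | f.toFun a = 0}

/-- The socle `Soc(A) = Ker λ ∩ Z(A,+)`. -/
def Soc (A : Type*) [SkewBrace A] : Set A :=
  {a | (∀ b : A, lam a b = b) ∧ ∀ b : A, a + b = b + a}

/-- The annihilator `Ann(A) = Soc(A) ∩ Z(A,∘)`. -/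
def ann (A : Type*) [SkewBrace A] : Set A :=
  {a | (∀ b : A, lam a b = b) ∧ (∀ b : A, a + b = b + a) ∧ (∀ b : A, a * b = b * a)}

/-- A simple skew left brace: it has exactly two ideals, `0` and itself. -/
def IsSimple (A : Type*) [SkewBrace A] : Prop :=
  (∃ x y : A, x ≠ y) ∧ ∀ I : Ideal A, I.carrier = {(0 : A)} ∨ I.carrier = Set.univ

/-- A prime ideal `P`: the quotient `A/P` is a prime brace; internally, for all
ideals `I, J ⊇ P` with `I * J ⊆ P`, one of `I, J` equals `P`. -/
def Ideal.IsPrime [SkewBrace A] (P : Ideal A) : Prop :=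
  ∀ I J : Ideal A, P.carrier ⊆ I.carrier → P.carrier ⊆ J.carrier →
    (∀ i ∈ I.carrier, ∀ j ∈ J.carrier, star i j ∈ P.carrier) →
    I.carrier ⊆ P.carrier ∨ J.carrier ⊆ P.carrier

end SkewBrace

namespace SkewBrace

/-- The direct product of a family of skew left braces. -/
instance piBrace {ι : Type*} (P : ι → Type*) [inst : ∀ i, SkewBrace (P i)] :
    SkewBrace (∀ i, P i) :=
  { (inferInstance : AddGroup (∀ i, P i)), (inferInstance : Group (∀ i, P i)) with
    compat := fun a b c => funext fun i => SkewBrace.compat (a i) (b i) (c i) }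

variable {A : Type*} [SkewBrace A]

-- basic lemmas
lemma mul_zero'' (a : A) : a * (0 : A) = a := by
  have h := SkewBrace.compat a 0 0
  rw [add_zero] at h
  have h2 : (0:A) = -a + a * 0 := by
    have h' : a * 0 + 0 = a * 0 + (-a + a * 0) := by rw [add_zero]; exact h
    exact add_left_cancel h'
  have h3 : a + 0 = a + (-a + a * 0) := congrArg (a + ·) h2
  rw [add_zero, ← add_assoc, add_neg_cancel, zero_add] at h3
  exact h3.symm

lemma one_eq_zero : (1 : A) = 0 := by
  have := mul_zero'' (1 : A)
  rw [one_mul] at this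
  exact this.symm

lemma mul_eq_add_lam (a b : A) : a * b = a + lam a b := by
  unfold lam; rw [← add_assoc, add_neg_cancel, zero_add]

lemma lam_one (b : A) : lam (1 : A) b = b := by
  unfold lam; rw [one_mul, one_eq_zero, neg_zero, zero_add]

lemma lam_add (a b c : A) : lam a (b + c) = lam a b + lam a c := by
  unfold lam
  rw [SkewBrace.compat a b c, ← add_assoc]

lemma mul_neg'' (a b : A) : a * (-b) = a + (-(a * b) + a) := by
  have h := SkewBrace.compat a b (-b)
  rw [add_neg_cancel, mul_zero''] at h
  have h1 : -a + a * (-b) = -(a*b) + a := by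
    calc -a + a*(-b) = -(a*b) + (a*b + (-a + a*(-b))) := by
          rw [← add_assoc, neg_add_cancel, zero_add]
      _ = -(a*b) + a := by rw [← h]
  calc a * (-b) = a + (-a + a*(-b)) := by rw [← add_assoc, add_neg_cancel, zero_add]
    _ = a + (-(a*b) + a) := by rw [h1]

lemma lam_mul (a b c : A) : lam (a * b) c = lam a (lam b c) := by
  unfold lam
  rw [SkewBrace.compat a (-b) (b*c), mul_neg'', ← mul_assoc]
  simp [← add_assoc]


-- ideal membership lemmas
namespace Ideal

variable (I : Ideal A)

lemma mul_mem {a b : A} (ha : a ∈ I.carrier) (hb : b ∈ I.carrier) :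
    a * b ∈ I.carrier := by
  rw [mul_eq_add_lam]; exact I.add_mem ha (I.lam_mem a hb)

lemma inv_mem {a : A} (ha : a ∈ I.carrier) : a⁻¹ ∈ I.carrier := by
  have h1 : lam a a⁻¹ = -a := by
    unfold lam; rw [mul_inv_cancel, one_eq_zero, add_zero]
  have h2 : lam a⁻¹ (-a) ∈ I.carrier := I.lam_mem a⁻¹ (I.neg_mem ha)
  rw [← h1, ← lam_mul, inv_mul_cancel, lam_one] at h2
  exact h2

lemma mem_of_neg_add {a b : A} (h : -a + b ∈ I.carrier) (ha : a ∈ I.carrier) :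
    b ∈ I.carrier := by
  have := I.add_mem ha h
  rwa [← add_assoc, add_neg_cancel, zero_add] at this

end Ideal

-- the quotient brace
def iSetoid (I : Ideal A) : Setoid A where
  r a b := -a + b ∈ I.carrier
  iseqv := by
    constructor
    · intro a; rw [neg_add_cancel]; exact I.zero_mem
    · intro a b h
      have := I.neg_mem h
      rwa [neg_add_rev, neg_neg] at this
    · intro a b c h1 h2
      have := I.add_mem h1 h2
      rwa [add_assoc, ← add_assoc b, add_neg_cancel, zero_add] at this

lemma neg_add_mem_iff (I : Ideal A) (a b : A) :
    -a + b ∈ I.carrier ↔ a⁻¹ * b ∈ I.carrier := by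
  have key : -a + b = lam a (a⁻¹ * b) := by
    unfold lam; rw [← mul_assoc, mul_inv_cancel, one_mul]
  constructor
  · intro h
    rw [key] at h
    have := I.lam_mem a⁻¹ h
    rwa [← lam_mul, inv_mul_cancel, lam_one] at this
  · intro h
    rw [key]; exact I.lam_mem a h

def QB (I : Ideal A) : Type _ := Quotient (iSetoid I)

def qmk (I : Ideal A) (a : A) : QB I := Quotient.mk (iSetoid I) a

lemma qmk_eq_iff (I : Ideal A) (a b : A) :
    qmk I a = qmk I b ↔ -a + b ∈ I.carrier :=
  ⟨fun h => Quotient.exact h, fun h => Quotient.sound h⟩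

instance (I : Ideal A) : Add (QB I) :=
  ⟨Quotient.map₂ (· + ·) (by
    intro a a' ha b b' hb
    show -(a + b) + (a' + b') ∈ I.carrier
    have h1 : -b + (-a + a') + b ∈ I.carrier := by
      have := I.add_conj_mem (-b) ha; rwa [neg_neg] at this
    have h2 := I.add_mem h1 hb
    have e : -b + (-a + a') + b + (-b + b') = -(a + b) + (a' + b') := by
      simp [neg_add_rev, add_assoc]
    rwa [e] at h2)⟩

instance (I : Ideal A) : Neg (QB I) :=
  ⟨Quotient.map (fun a => -a) (by
    intro a a' h
    show -(-a) + -a' ∈ I.carrier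
    have h1 : -a' + a ∈ I.carrier := by
      have := I.neg_mem h; rwa [neg_add_rev, neg_neg] at this
    have h2 := I.add_conj_mem a h1
    have e : a + (-a' + a) + -a = -(-a) + -a' := by
      simp [add_assoc]
    rwa [e] at h2)⟩

instance (I : Ideal A) : Zero (QB I) := ⟨qmk I 0⟩

instance (I : Ideal A) : Mul (QB I) :=
  ⟨Quotient.map₂ (· * ·) (by
    intro a a' ha b b' hb
    have ha' : a⁻¹ * a' ∈ I.carrier := (neg_add_mem_iff I a a').mp ha
    have hb' : b⁻¹ * b' ∈ I.carrier := (neg_add_mem_iff I b b').mp hb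
    show -(a * b) + (a' * b') ∈ I.carrier
    rw [neg_add_mem_iff]
    have h1 : b⁻¹ * (a⁻¹ * a') * b ∈ I.carrier := by
      have := I.mul_conj_mem b⁻¹ ha'; rwa [inv_inv] at this
    have h2 := I.mul_mem h1 hb'
    have e : b⁻¹ * (a⁻¹ * a') * b * (b⁻¹ * b') = (a * b)⁻¹ * (a' * b') := by
      simp [mul_inv_rev, mul_assoc]
    rwa [e] at h2)⟩

instance (I : Ideal A) : Inv (QB I) :=
  ⟨Quotient.map (fun a => a⁻¹) (by
    intro a a' h
    have ha' : a⁻¹ * a' ∈ I.carrier := (neg_add_mem_iff I a a').mp h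
    show -a⁻¹ + a'⁻¹ ∈ I.carrier
    rw [neg_add_mem_iff]
    have h1 : a'⁻¹ * a ∈ I.carrier := by
      have := I.inv_mem ha'; rwa [mul_inv_rev, inv_inv] at this
    have h2 := I.mul_conj_mem a h1
    have e : a * (a'⁻¹ * a) * a⁻¹ = (a⁻¹)⁻¹ * a'⁻¹ := by
      simp [mul_assoc]
    rwa [e] at h2)⟩

lemma qmk_add (I : Ideal A) (a b : A) : qmk I a + qmk I b = qmk I (a + b) := rfl
lemma qmk_neg (I : Ideal A) (a : A) : -(qmk I a) = qmk I (-a) := rfl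
lemma qmk_mul (I : Ideal A) (a b : A) : qmk I a * qmk I b = qmk I (a * b) := rfl
lemma qmk_inv (I : Ideal A) (a : A) : (qmk I a)⁻¹ = qmk I a⁻¹ := rfl
lemma qmk_surj (I : Ideal A) : Function.Surjective (qmk I) :=
  fun x => Quotient.inductionOn x (fun a => ⟨a, rfl⟩)

instance (I : Ideal A) : AddGroup (QB I) where
  add_assoc := fun x y z => Quotient.inductionOn₃ x y z fun a b c =>
    congrArg (qmk I) (add_assoc a b c)
  zero_add := fun x => Quotient.inductionOn x fun a => congrArg (qmk I) (zero_add a)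
  add_zero := fun x => Quotient.inductionOn x fun a => congrArg (qmk I) (add_zero a)
  neg_add_cancel := fun x => Quotient.inductionOn x fun a =>
    congrArg (qmk I) (neg_add_cancel a)
  nsmul := nsmulRec
  zsmul := zsmulRec

instance (I : Ideal A) : One (QB I) := ⟨qmk I 1⟩

instance (I : Ideal A) : Group (QB I) where
  mul_assoc := fun x y z => Quotient.inductionOn₃ x y z fun a b c =>
    congrArg (qmk I) (mul_assoc a b c)
  one_mul := fun x => Quotient.inductionOn x fun a => congrArg (qmk I) (one_mul a)
  mul_one := fun x => Quotient.inductionOn x fun a => congrArg (qmk I) (mul_one a)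
  inv_mul_cancel := fun x => Quotient.inductionOn x fun a =>
    congrArg (qmk I) (inv_mul_cancel a)

instance (I : Ideal A) : SkewBrace (QB I) where
  compat := fun x y z => Quotient.inductionOn₃ x y z fun a b c =>
    congrArg (qmk I) (SkewBrace.compat a b c)


-- comap of an ideal along qmk
def comapIdeal (I : Ideal A) (J : Ideal (QB I)) : Ideal A where
  carrier := {a | qmk I a ∈ J.carrier}
  zero_mem := J.zero_mem
  add_mem := fun _ _ ha hb => J.add_mem ha hb
  neg_mem := fun _ ha => J.neg_mem ha
  add_conj_mem := fun a _ hb => J.add_conj_mem (qmk I a) hb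
  mul_conj_mem := fun a _ hb => J.mul_conj_mem (qmk I a) hb
  lam_mem := fun a _ hb => J.lam_mem (qmk I a) hb

lemma qmk_eq_zero_iff (I : Ideal A) (a : A) : qmk I a = 0 ↔ a ∈ I.carrier := by
  show qmk I a = qmk I 0 ↔ _
  rw [qmk_eq_iff, add_zero]
  constructor
  · intro h; have := I.neg_mem h; rwa [neg_neg] at this
  · exact fun h => I.neg_mem h

lemma quot_simple (M : Ideal A) (hM : M.IsMaximal) : IsSimple (QB M) := by
  obtain ⟨a, ha⟩ := Set.ne_univ_iff_exists_notMem _ |>.mp hM.1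
  constructor
  · refine ⟨qmk M a, 0, fun h => ha ?_⟩
    exact (qmk_eq_zero_iff M a).mp h
  · intro J
    have hsub : M.carrier ⊆ (comapIdeal M J).carrier := by
      intro m hm
      show qmk M m ∈ J.carrier
      rw [(qmk_eq_zero_iff M m).mpr hm]
      exact J.zero_mem
    rcases hM.2 (comapIdeal M J) hsub with h | h
    · left
      ext x
      obtain ⟨b, rfl⟩ := qmk_surj M x
      simp only [Set.mem_singleton_iff]
      constructor
      · intro hb
        have : b ∈ M.carrier := by rw [← h]; exact hb
        exact (qmk_eq_zero_iff M b).mpr this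
      · intro hb; rw [hb]; exact J.zero_mem
    · right
      ext x
      simp only [Set.mem_univ, iff_true]
      obtain ⟨b, rfl⟩ := qmk_surj M x
      have : b ∈ (comapIdeal M J).carrier := by rw [h]; trivial
      exact this

-- intersection of a family of ideals
def interIdeal {ι : Type*} (M : ι → Ideal A) : Ideal A where
  carrier := {x | ∀ i, x ∈ (M i).carrier}
  zero_mem := fun i => (M i).zero_mem
  add_mem := fun _ _ ha hb i => (M i).add_mem (ha i) (hb i)
  neg_mem := fun _ ha i => (M i).neg_mem (ha i)
  add_conj_mem := fun a _ hb i => (M i).add_conj_mem a (hb i)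
  mul_conj_mem := fun a _ hb i => (M i).mul_conj_mem a (hb i)
  lam_mem := fun a _ hb i => (M i).lam_mem a (hb i)

-- sum of two ideals
def sumSet (I J : Ideal A) : Set A := {x | ∃ i ∈ I.carrier, ∃ j ∈ J.carrier, x = i + j}

lemma sumSet_eq_mul (I J : Ideal A) :
    sumSet I J = {x | ∃ i ∈ I.carrier, ∃ j ∈ J.carrier, x = i * j} := by
  ext x
  constructor
  · rintro ⟨i, hi, j, hj, rfl⟩
    refine ⟨i, hi, lam i⁻¹ j, J.lam_mem _ hj, ?_⟩
    rw [mul_eq_add_lam, ← lam_mul, mul_inv_cancel, lam_one]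
  · rintro ⟨i, hi, j, hj, rfl⟩
    exact ⟨i, hi, lam i j, J.lam_mem _ hj, mul_eq_add_lam i j⟩

def sumIdeal (I J : Ideal A) : Ideal A where
  carrier := sumSet I J
  zero_mem := ⟨0, I.zero_mem, 0, J.zero_mem, (add_zero 0).symm⟩
  add_mem := by
    rintro _ _ ⟨i, hi, j, hj, rfl⟩ ⟨i', hi', j', hj', rfl⟩
    refine ⟨i + (j + i' + -j), I.add_mem hi (I.add_conj_mem j hi'), j + j',
      J.add_mem hj hj', ?_⟩
    simp [add_assoc]
  neg_mem := by
    rintro _ ⟨i, hi, j, hj, rfl⟩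
    refine ⟨-j + -i + - -j, I.add_conj_mem (-j) (I.neg_mem hi), -j, J.neg_mem hj, ?_⟩
    simp [add_assoc]
  add_conj_mem := by
    rintro a _ ⟨i, hi, j, hj, rfl⟩
    refine ⟨a + i + -a, I.add_conj_mem a hi, a + j + -a, J.add_conj_mem a hj, ?_⟩
    simp [add_assoc]
  mul_conj_mem := by
    intro a x hx
    have hx' : x ∈ {x | ∃ i ∈ I.carrier, ∃ j ∈ J.carrier, x = i * j} := by
      rw [← sumSet_eq_mul]; exact hx
    show a * x * a⁻¹ ∈ sumSet I J
    rw [sumSet_eq_mul]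
    obtain ⟨i, hi, j, hj, rfl⟩ := hx'

    refine ⟨a * i * a⁻¹, I.mul_conj_mem a hi, a * j * a⁻¹, J.mul_conj_mem a hj, ?_⟩
    simp [mul_assoc]
  lam_mem := by
    rintro a _ ⟨i, hi, j, hj, rfl⟩
    exact ⟨lam a i, I.lam_mem a hi, lam a j, J.lam_mem a hj, lam_add a i j⟩

-- Artinian gives minimal elements
lemma exists_minimal (hA : IsArtinian A) (S : Set (Ideal A)) (hS : S.Nonempty) :
    ∃ I ∈ S, ∀ J ∈ S, J.carrier ⊆ I.carrier → J.carrier = I.carrier := by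
  by_contra hcon
  push_neg at hcon
  have h : ∀ I : {I : Ideal A // I ∈ S}, ∃ J : {I : Ideal A // I ∈ S},
      J.1.carrier ⊆ I.1.carrier ∧ J.1.carrier ≠ I.1.carrier := by
    rintro ⟨I, hI⟩
    obtain ⟨J, hJ1, hJ2, hJ3⟩ := hcon I hI
    exact ⟨⟨J, hJ1⟩, hJ2, hJ3⟩
  choose g hg1 hg2 using h
  obtain ⟨I0, hI0⟩ := hS
  set f : ℕ → {I : Ideal A // I ∈ S} := fun n => g^[n] ⟨I0, hI0⟩ with hf
  have hstep : ∀ n, f (n + 1) = g (f n) := by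
    intro n; rw [hf]; exact Function.iterate_succ_apply' g n _
  obtain ⟨N, hN⟩ := hA (fun n => (f n).1) (by
    intro n
    show (f (n + 1)).1.carrier ⊆ (f n).1.carrier
    rw [hstep n]; exact hg1 (f n))
  have := hN (N + 1) (Nat.le_succ N)
  rw [hstep N] at this
  exact hg2 (f N) this


lemma key (hA : IsArtinian A) (hmax : ∃ M : Ideal A, M.IsMaximal) :
    ∃ (m : ℕ) (M : Fin (m + 1) → Ideal A), (∀ i, (M i).IsMaximal) ∧
      radical A = {x | ∀ i, x ∈ (M i).carrier} ∧
      ∀ i, ∃ x, (∀ t : Fin m, x ∈ (M (i.succAbove t)).carrier) ∧ x ∉ (M i).carrier := by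
  classical
  obtain ⟨M0, hM0⟩ := hmax
  -- Step A : minimal finite intersection of maximal ideals
  set S : Set (Ideal A) := {I | ∃ (n : ℕ) (M : Fin (n + 1) → Ideal A),
    (∀ i, (M i).IsMaximal) ∧ I.carrier = {x | ∀ i, x ∈ (M i).carrier}} with hSdef
  have hS : S.Nonempty := by
    refine ⟨interIdeal (fun _ : Fin 1 => M0), 0, (fun _ : Fin 1 => M0), fun _ => hM0, rfl⟩
  obtain ⟨I, hIS, hImin⟩ := exists_minimal hA S hS
  obtain ⟨n, Mf, hmaxf, hcar⟩ := hIS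
  have claim1 : ∀ M : Ideal A, M.IsMaximal → I.carrier ⊆ M.carrier := by
    intro M hM
    set J : Ideal A := interIdeal (Fin.cons M Mf) with hJ
    have hJS : J ∈ S := by
      refine ⟨n + 1, Fin.cons M Mf, ?_, rfl⟩
      intro i
      refine Fin.cases ?_ ?_ i
      · rw [Fin.cons_zero]; exact hM
      · intro j; rw [Fin.cons_succ]; exact hmaxf j
    have hJsub : J.carrier ⊆ I.carrier := by
      intro x hx
      rw [hcar]
      intro i
      have := hx i.succ
      rwa [Fin.cons_succ] at this
    have heq := hImin J hJS hJsub
    intro x hx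
    rw [← heq] at hx
    have := hx 0
    rwa [Fin.cons_zero] at this
  have claim2 : radical A = I.carrier := by
    ext x
    constructor
    · intro hx
      rw [hcar]
      exact fun i => hx (Mf i) (hmaxf i)
    · intro hx M hM
      exact claim1 M hM hx
  -- Step B : minimal number of maximal ideals
  set Pn : ℕ → Prop := fun n => ∃ M : Fin n → Ideal A,
    (∀ i, (M i).IsMaximal) ∧ radical A = {x | ∀ i, x ∈ (M i).carrier} with hPn
  have hP : ∃ n, Pn n := ⟨n + 1, Mf, hmaxf, claim2.trans hcar⟩
  have hne : Nat.find hP ≠ 0 := by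
    intro h0
    have := Nat.find_spec hP
    rw [h0] at this
    obtain ⟨M, _, hr⟩ := this
    have huniv : radical A = Set.univ := by
      rw [hr]; ext x
      constructor
      · intro _; trivial
      · intro _ i; exact i.elim0
    have : M0.carrier = Set.univ := by
      apply Set.eq_univ_of_univ_subset
      rw [← huniv]
      intro x hx
      exact hx M0 hM0
    exact hM0.1 this
  obtain ⟨m, hm⟩ := Nat.exists_eq_succ_of_ne_zero hne
  have hspec : Pn (m + 1) := by
    rw [← Nat.succ_eq_add_one, ← hm]; exact Nat.find_spec hP
  have hmin : ¬ Pn m := Nat.find_min hP (by omega)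
  obtain ⟨M, hmaxM, hradM⟩ := hspec
  refine ⟨m, M, hmaxM, hradM, ?_⟩
  intro i
  by_contra hred
  push_neg at hred
  apply hmin
  refine ⟨fun t => M (i.succAbove t), fun t => hmaxM _, ?_⟩
  ext x
  constructor
  · intro hx t
    rw [hradM] at hx
    exact hx _
  · intro hx
    rw [hradM]
    intro l
    by_cases hl : l = i
    · subst hl
      exact hred x (fun t => hx t)
    · obtain ⟨t, rfl⟩ := Fin.exists_succAbove_eq hl
      exact hx t


/-- if `A` is Artinian then `A/Rad(A)` is a direct product of
finitely many simple skew left braces (the quotient is presented as a surjective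
brace homomorphism with kernel `Rad(A)`). -/
theorem artinian_semisimple_quotient (A : Type u) [SkewBrace A] (hA : IsArtinian A) :
    ∃ (n : ℕ) (P : Fin n → Type u) (inst : ∀ i, SkewBrace (P i)),
      (∀ i, @IsSimple (P i) (inst i)) ∧
      ∃ f : @BraceHom A (∀ i, P i) _ (@piBrace (Fin n) P inst),
        Function.Surjective f.toFun ∧
        @BraceHom.ker A (∀ i, P i) _ (@piBrace (Fin n) P inst) f = radical A := by
  classical
  by_cases hmax : ∃ M : Ideal A, M.IsMaximal
  case neg =>
    -- no maximal ideals : radical = univ, empty product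
    refine ⟨0, fun _ => A, fun _ => inferInstance, fun i => Fin.elim0 i, ?_⟩
    refine ⟨⟨fun _ i => Fin.elim0 i, fun _ _ => funext fun i => Fin.elim0 i,
        fun _ _ => funext fun i => Fin.elim0 i⟩, ?_, ?_⟩
    · intro g; exact ⟨0, funext fun i => Fin.elim0 i⟩
    · ext a
      constructor
      · intro _ M hM; exact absurd ⟨M, hM⟩ hmax
      · intro _; show _ = _; exact funext fun i => Fin.elim0 i
  case pos =>
    obtain ⟨m, M, hmaxM, hrad, hirr⟩ := key hA hmax
    refine ⟨m + 1, fun i => QB (M i), fun i => inferInstance,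
      fun i => quot_simple (M i) (hmaxM i), ?_⟩
    refine ⟨⟨fun a i => qmk (M i) a, fun x y => funext fun i => rfl,
      fun x y => funext fun i => rfl⟩, ?_, ?_⟩
    · -- surjectivity
      -- comaximality decomposition
      have decomp : ∀ i : Fin (m + 1), ∀ a : A, ∃ j mm : A,
          (∀ t : Fin m, j ∈ (M (i.succAbove t)).carrier) ∧ mm ∈ (M i).carrier ∧
          a = j + mm := by
        intro i a
        obtain ⟨x, hx1, hx2⟩ := hirr i
        set J : Ideal A := interIdeal (fun t => M (i.succAbove t)) with hJ
        set K : Ideal A := sumIdeal J (M i) with hK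
        have hsub : (M i).carrier ⊆ K.carrier := by
          intro mm hmm
          exact ⟨0, fun t => (M (i.succAbove t)).zero_mem, mm, hmm, (zero_add mm).symm⟩
        rcases (hmaxM i).2 K hsub with h | h
        · exfalso
          have : x ∈ K.carrier := ⟨x, hx1, 0, (M i).zero_mem, (add_zero x).symm⟩
          rw [h] at this
          exact hx2 this
        · have : a ∈ K.carrier := by rw [h]; trivial
          obtain ⟨j, hj, mm, hmm, heq⟩ := this
          exact ⟨j, mm, hj, hmm, heq⟩
      intro g
      set a : ∀ i : Fin (m + 1), A := fun i => (g i).out with ha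
      have he : ∀ i : Fin (m + 1), ∃ e : A,
          (∀ l : Fin (m + 1), l ≠ i → e ∈ (M l).carrier) ∧
          qmk (M i) e = qmk (M i) (a i) := by
        intro i
        obtain ⟨j, mm, hj, hmm, heq⟩ := decomp i (a i)
        refine ⟨j, ?_, ?_⟩
        · intro l hl
          obtain ⟨t, rfl⟩ := Fin.exists_succAbove_eq hl
          exact hj t
        · rw [qmk_eq_iff, heq, neg_add_cancel_left]
          exact hmm
      choose e he1 he2 using he
      set x : A := (List.finRange (m + 1)).foldr (fun i acc => e i + acc) 0 with hx
      have fold0 : ∀ (l : List (Fin (m + 1))) (t : Fin (m + 1)), t ∉ l →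
          qmk (M t) (l.foldr (fun i acc => e i + acc) 0) = 0 := by
        intro l
        induction l with
        | nil => intro t _; rfl
        | cons i L ih =>
          intro t ht
          have ht1 : t ≠ i := fun h => ht (h ▸ (List.mem_cons_self (a := i) (l := L)))
          have ht2 : t ∉ L := fun h => ht (List.mem_cons_of_mem i h)
          show qmk (M t) (e i + _) = 0
          rw [← qmk_add, ih t ht2, (qmk_eq_zero_iff (M t) (e i)).mpr (he1 i t ht1),
            add_zero]
      have fold2 : ∀ (l : List (Fin (m + 1))), l.Nodup → ∀ t ∈ l,
          qmk (M t) (l.foldr (fun i acc => e i + acc) 0) = qmk (M t) (a t) := by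
        intro l
        induction l with
        | nil => intro _ t ht; exact absurd ht List.not_mem_nil
        | cons i L ih =>
          intro hnd t ht
          rw [List.nodup_cons] at hnd
          show qmk (M t) (e i + _) = _
          rw [← qmk_add]
          rcases List.mem_cons.mp ht with h | h
          · subst h
            rw [he2 t, fold0 L t hnd.1, add_zero]
          · have ht1 : t ≠ i := fun hh => hnd.1 (hh ▸ h)
            rw [ih hnd.2 t h, (qmk_eq_zero_iff (M t) (e i)).mpr (he1 i t ht1), zero_add]
      refine ⟨x, funext fun t => ?_⟩
      show qmk (M t) x = g t
      rw [hx, fold2 (List.finRange (m + 1)) (List.nodup_finRange _) t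
        (List.mem_finRange t)]
      exact Quotient.out_eq (g t)
    · -- kernel
      ext b
      show (fun i => qmk (M i) b) = 0 ↔ b ∈ radical A
      rw [hrad]
      constructor
      · intro h i
        have := congrFun h i
        exact (qmk_eq_zero_iff (M i) b).mp this
      · intro h
        exact funext fun i => (qmk_eq_zero_iff (M i) b).mpr (h i)


end SkewBrace
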